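/- arXiv:1701.05395 — 5 statements merged into one kernel-verified Lean document; each statement's English description precedes it below -/
import Mathlib

section
/- Let (G, p) be a probabilistic graph and let A, B ∈ V be distinct vertices that are mono-connected, with unique path π = (A = v_0, v_1, …, v_k = B). Then the reachability probability between A and B equals the product of the edge probabilities along π: P(A↔B) = ∏_{i=0}^{k−1} p({v_i, v_{i+1}}). -/
open Finset

/-- Probability of the possible world `F` of a probabilistic graph with edge set `E`
and edge-probability function `p`: each edge exists independently with probability `p e`. -/
noncomputable def worldProb {V : Type*} [DecidableEq V]
    (p : Sym2 V → ℝ) (E F : Finset (Sym2 V)) : ℝ :=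
  (∏ e ∈ F, p e) * ∏ e ∈ E \ F, (1 - p e)

open scoped Classical in
/-- Reachability probability `P(A ↔ B)`: the total probability of the possible worlds
`F ⊆ E` in which `A` and `B` are connected in the spanning subgraph `(V, F)`. -/
noncomputable def reachProb {V : Type*} [DecidableEq V]
    (p : Sym2 V → ℝ) (E : Finset (Sym2 V)) (A B : V) : ℝ :=
  ∑ F ∈ E.powerset,
    if (SimpleGraph.fromEdgeSet (↑F : Set (Sym2 V))).Reachable A B then worldProb p E F else 0

open scoped Classical in
/-- Information flow to `Q` in the possible world `F`: total weight of the vertices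
connected to `Q` in the spanning subgraph `(V, F)` (`Q` itself counted). -/
noncomputable def flowW {V : Type*} [Fintype V]
    (W : V → ℝ) (Q : V) (F : Finset (Sym2 V)) : ℝ :=
  ∑ v : V, if (SimpleGraph.fromEdgeSet (↑F : Set (Sym2 V))).Reachable Q v then W v else 0

/-- Expected information flow to `Q` in the probabilistic graph with edge set `E`. -/
noncomputable def expFlow {V : Type*} [Fintype V] [DecidableEq V]
    (p : Sym2 V → ℝ) (E : Finset (Sym2 V)) (W : V → ℝ) (Q : V) : ℝ :=
  ∑ F ∈ E.powerset, worldProb p E F * flowW W Q F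

/-!
If `A` and `B` are joined by a unique path `π`, then `A` and `B` are connected in a possible world
`F` exactly when `F` contains every edge of `π`: a path in `F` is also a path in `G`, hence equals
`π`. The worlds containing a fixed edge set `S` are the sets `S ∪ F'` with `F' ⊆ E \ S`, and
their probabilities sum to `∏_{e ∈ S} p e`, the remaining edges contributing
`∏_{e ∈ E \ S} (p e + (1 - p e)) = 1`.
-/

namespace SimpleGraph

variable {V : Type*} [DecidableEq V] {G H : SimpleGraph V} {A B : V}

theorem reachable_iff_edges_subset_of_unique_path (hHG : H ≤ G) {π : G.Walk A B}
    (huniq : ∀ w : G.Walk A B, w.IsPath → w = π) :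
    H.Reachable A B ↔ ∀ e ∈ π.edges, e ∈ H.edgeSet := by
  refine ⟨fun ⟨w⟩ => ?_, fun h => ⟨π.transfer H h⟩⟩
  obtain ⟨q, hq⟩ := w.toPath
  rw [← huniq _ (hq.mapLe hHG), Walk.edges_mapLe_eq_edges]
  exact q.edges_subset_edgeSet

theorem reachable_fromEdgeSet_iff_of_unique_path {F : Set (Sym2 V)} (hF : F ⊆ G.edgeSet)
    {π : G.Walk A B} (huniq : ∀ w : G.Walk A B, w.IsPath → w = π) :
    (fromEdgeSet F).Reachable A B ↔ ∀ e ∈ π.edges, e ∈ F := by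
  rw [reachable_iff_edges_subset_of_unique_path
    ((fromEdgeSet_le G).2 (Set.sdiff_subset.trans hF)) huniq]
  refine forall₂_congr fun e he => ?_
  simp [edgeSet_fromEdgeSet, G.not_isDiag_of_mem_edgeSet (π.edges_subset_edgeSet he)]

end SimpleGraph

section WorldProb

variable {V : Type*} [DecidableEq V] (p : Sym2 V → ℝ) {E S : Finset (Sym2 V)}

theorem sum_worldProb_powerset :
    ∑ F ∈ E.powerset, worldProb p E F = 1 := by
  simp [worldProb, ← prod_add]

theorem worldProb_union {F : Finset (Sym2 V)} (hSF : Disjoint S F) :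
    worldProb p E (S ∪ F) = (∏ e ∈ S, p e) * worldProb p (E \ S) F := by
  rw [worldProb, worldProb, prod_union hSF, sdiff_sdiff_left, sup_eq_union]
  ring

theorem sum_worldProb_Icc (hSE : S ⊆ E) :
    ∑ F ∈ Icc S E, worldProb p E F = ∏ e ∈ S, p e := by
  have hdisj : ∀ F ∈ (E \ S).powerset, Disjoint S F := fun F hF =>
    disjoint_of_subset_right (mem_powerset.1 hF) disjoint_sdiff
  have hinj : Set.InjOn (S ∪ ·) ↑(E \ S).powerset := fun F hF F' hF' h => by
    rw [← union_sdiff_cancel_left (hdisj F hF), ← union_sdiff_cancel_left (hdisj F' hF')]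
    exact congrArg (· \ S) h
  rw [Icc_eq_image_powerset hSE, sum_image hinj,
    sum_congr rfl fun F hF => worldProb_union p (hdisj F hF), ← mul_sum,
    sum_worldProb_powerset, mul_one]

end WorldProb

theorem reachProb_eq_prod_of_unique_path_general {V : Type*} [Fintype V] [DecidableEq V]
    (G : SimpleGraph V) [DecidableRel G.Adj]
    (p : Sym2 V → ℝ)
    (A B : V)
    (π : G.Walk A B) (hπ : π.IsPath)
    (huniq : ∀ w : G.Walk A B, w.IsPath → w = π) :
    reachProb p G.edgeFinset A B = (π.edges.map p).prod := by
  have hπE : π.edges.toFinset ⊆ G.edgeFinset := fun e he => by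
    simpa using π.edges_subset_edgeSet (List.mem_toFinset.1 he)
  calc reachProb p G.edgeFinset A B
      = ∑ F ∈ G.edgeFinset.powerset,
          if π.edges.toFinset ⊆ F then worldProb p G.edgeFinset F else 0 := by
        refine sum_congr rfl fun F hF => ?_
        have hFG : (↑F : Set (Sym2 V)) ⊆ G.edgeSet := by
          simpa using coe_subset.2 (mem_powerset.1 hF)
        simp only [SimpleGraph.reachable_fromEdgeSet_iff_of_unique_path hFG huniq,
          List.mem_toFinset, subset_iff, mem_coe]
    _ = ∑ F ∈ Icc π.edges.toFinset G.edgeFinset, worldProb p G.edgeFinset F := by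
        rw [Icc_eq_filter_powerset, sum_filter]
    _ = (π.edges.map p).prod := by
        rw [sum_worldProb_Icc p hπE, List.prod_toFinset p hπ.edges_nodup]

/-- if `A ≠ B` are mono-connected in the probabilistic graph `(G, p)`,
with unique path `π`, then the reachability probability between `A` and `B` equals
the product of the edge probabilities along `π`. -/
theorem reachProb_eq_prod_of_unique_path {V : Type*} [Fintype V] [DecidableEq V]
    (G : SimpleGraph V) [DecidableRel G.Adj]
    (p : Sym2 V → ℝ) (hp : ∀ e ∈ G.edgeSet, 0 ≤ p e ∧ p e ≤ 1)
    (A B : V) (hAB : A ≠ B)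
    (π : G.Walk A B) (hπ : π.IsPath)
    (huniq : ∀ w : G.Walk A B, w.IsPath → w = π) :
    reachProb p G.edgeFinset A B = (π.edges.map p).prod :=
  reachProb_eq_prod_of_unique_path_general G p A B π hπ huniq
end

section
/- Let (G, p) be a probabilistic graph that is mono-connected (every pair of distinct vertices has exactly one path between them, i.e., G is a tree), let W : V → ℝ≥0 be a node weight function and Q ∈ V a query vertex. Then the expected information flow satisfies E(flow(Q, G)) = Σ_{v∈V} W(v) · ∏_{e ∈ path(Q,v)} p(e), where path(Q,v) is the set of edges on the unique path from Q to v (the empty product, for v = Q, being 1). -/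
open Finset

lemma sum_worldProb {V : Type*} [DecidableEq V] (p : Sym2 V → ℝ) (E : Finset (Sym2 V)) :
    ∑ F ∈ E.powerset, worldProb p E F = 1 := by
  have := Finset.prod_add (fun e => p e) (fun e => 1 - p e) E
  simp only [add_sub_cancel, Finset.prod_const_one] at this
  unfold worldProb
  exact this.symm

lemma sum_worldProb_filter {V : Type*} [DecidableEq V] (p : Sym2 V → ℝ)
    {S E : Finset (Sym2 V)} (hS : S ⊆ E) :
    ∑ F ∈ E.powerset, (if S ⊆ F then worldProb p E F else 0) = ∏ e ∈ S, p e := by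
  classical
  rw [← Finset.sum_filter]
  have key : ∀ F ∈ (E.powerset.filter (fun F => S ⊆ F)),
      worldProb p E F = (∏ e ∈ S, p e) * worldProb p (E \ S) (F \ S) := by
    intro F hF
    simp only [Finset.mem_filter, Finset.mem_powerset] at hF
    obtain ⟨hFE, hSF⟩ := hF
    unfold worldProb
    have h1 : F = S ∪ (F \ S) := by rw [Finset.union_sdiff_of_subset hSF]
    have h2 : (E \ S) \ (F \ S) = E \ F := by
      ext e
      simp only [Finset.mem_sdiff]
      constructor
      · rintro ⟨⟨he, hs⟩, hf⟩
        exact ⟨he, fun hF => hf ⟨hF, hs⟩⟩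
      · rintro ⟨he, hf⟩
        exact ⟨⟨he, fun hs => hf (hSF hs)⟩, fun ⟨hF, _⟩ => hf hF⟩
    rw [h2]
    rw [show (∏ e ∈ F, p e) = ∏ e ∈ S ∪ (F \ S), p e by rw [← h1]]
    rw [Finset.prod_union (Finset.disjoint_sdiff)]
    ring
  rw [Finset.sum_congr rfl key, ← Finset.mul_sum]
  have hbij : ∑ F ∈ (E.powerset.filter (fun F => S ⊆ F)), worldProb p (E \ S) (F \ S)
      = ∑ F' ∈ (E \ S).powerset, worldProb p (E \ S) F' := by
    apply Finset.sum_nbij' (fun F => F \ S) (fun F' => F' ∪ S)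
    · intro F hF
      simp only [Finset.mem_filter, Finset.mem_powerset] at hF ⊢
      exact Finset.sdiff_subset_sdiff hF.1 le_rfl
    · intro F' hF'
      simp only [Finset.mem_filter, Finset.mem_powerset] at hF' ⊢
      constructor
      · exact Finset.union_subset (hF'.trans Finset.sdiff_subset) hS
      · exact Finset.subset_union_right
    · intro F hF
      simp only [Finset.mem_filter, Finset.mem_powerset] at hF
      rw [Finset.sdiff_union_self_eq_union, Finset.union_eq_left.mpr hF.2]
    · intro F' hF'
      simp only [Finset.mem_powerset] at hF'
      rw [Finset.union_sdiff_right]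
      exact Finset.sdiff_eq_self_of_disjoint (Finset.disjoint_left.mpr
        fun a ha => (Finset.mem_sdiff.mp (hF' ha)).2)
    · intro F hF
      rfl
  rw [hbij, sum_worldProb, mul_one]

lemma reach_iff {V : Type*} [DecidableEq V] (G : SimpleGraph V) (Q : V)
    (π : ∀ v : V, G.Walk Q v) (hπ : ∀ v, (π v).IsPath)
    (huniq : ∀ (v : V) (w : G.Walk Q v), w.IsPath → w = π v)
    (F : Finset (Sym2 V)) (hF : (↑F : Set (Sym2 V)) ⊆ G.edgeSet) (v : V) :
    (SimpleGraph.fromEdgeSet (↑F : Set (Sym2 V))).Reachable Q v ↔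
      (π v).edges.toFinset ⊆ F := by
  constructor
  · rintro ⟨w⟩
    have wp := w.toPath
    obtain ⟨w', hw'⟩ := wp
    have hsub : ∀ e ∈ w'.edges, e ∈ G.edgeSet := by
      intro e he
      have := w'.edges_subset_edgeSet he
      rw [SimpleGraph.edgeSet_fromEdgeSet] at this
      exact hF this.1
    have ht : (w'.transfer G hsub).IsPath := hw'.transfer hsub
    have := huniq v _ ht
    intro e he
    rw [← this] at he
    rw [SimpleGraph.Walk.edges_transfer] at he
    have := w'.edges_subset_edgeSet (List.mem_toFinset.mp he)
    rw [SimpleGraph.edgeSet_fromEdgeSet] at this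
    exact this.1
  · intro h
    have hsub : ∀ e ∈ (π v).edges, e ∈ (SimpleGraph.fromEdgeSet (↑F : Set (Sym2 V))).edgeSet := by
      intro e he
      rw [SimpleGraph.edgeSet_fromEdgeSet]
      refine ⟨h (List.mem_toFinset.mpr he), ?_⟩
      exact SimpleGraph.not_isDiag_of_mem_edgeSet G ((π v).edges_subset_edgeSet he)
    exact ⟨(π v).transfer _ hsub⟩


/-- in a mono-connected probabilistic graph (a tree: every pair of
distinct vertices has exactly one path between them), the expected information flow
to `Q` is `∑ v, W v * ∏_{e ∈ path(Q,v)} p e`, where `π v` is the unique path from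
`Q` to `v` (for `v = Q` it is the empty path, giving the empty product `1`). -/
theorem expFlow_of_monoConnected {V : Type*} [Fintype V] [DecidableEq V]
    (G : SimpleGraph V) [DecidableRel G.Adj]
    (p : Sym2 V → ℝ) (hp : ∀ e ∈ G.edgeSet, 0 ≤ p e ∧ p e ≤ 1)
    (W : V → ℝ) (hW : ∀ v, 0 ≤ W v) (Q : V)
    (hmono : ∀ u v : V, u ≠ v → ∃! w : G.Walk u v, w.IsPath)
    (π : ∀ v : V, G.Walk Q v) (hπ : ∀ v, (π v).IsPath)
    (huniq : ∀ (v : V) (w : G.Walk Q v), w.IsPath → w = π v) :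
    expFlow p G.edgeFinset W Q = ∑ v : V, W v * ((π v).edges.map p).prod := by
  classical
  have flow_eq : ∀ F ∈ G.edgeFinset.powerset,
      flowW W Q F = ∑ v : V, if (π v).edges.toFinset ⊆ F then W v else 0 := by
    intro F hF
    have hFE : (↑F : Set (Sym2 V)) ⊆ G.edgeSet := by
      intro e he
      rw [Finset.mem_powerset] at hF
      exact SimpleGraph.mem_edgeFinset.mp (hF he)
    unfold flowW
    refine Finset.sum_congr rfl fun v _ => ?_
    simp only [reach_iff G Q π hπ huniq F hFE v]
  unfold expFlow
  have step1 : ∀ F ∈ G.edgeFinset.powerset,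
      worldProb p G.edgeFinset F * flowW W Q F
      = ∑ v : V, (if (π v).edges.toFinset ⊆ F then worldProb p G.edgeFinset F * W v else 0) := by
    intro F hF
    rw [flow_eq F hF, Finset.mul_sum]
    exact Finset.sum_congr rfl fun v _ => by rw [mul_ite, mul_zero]
  rw [Finset.sum_congr rfl step1, Finset.sum_comm]
  refine Finset.sum_congr rfl fun v _ => ?_
  have hS : (π v).edges.toFinset ⊆ G.edgeFinset := by
    intro e he
    exact SimpleGraph.mem_edgeFinset.mpr ((π v).edges_subset_edgeSet (List.mem_toFinset.mp he))
  have : ∀ F ∈ G.edgeFinset.powerset,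
      (if (π v).edges.toFinset ⊆ F then worldProb p G.edgeFinset F * W v else 0)
      = (if (π v).edges.toFinset ⊆ F then worldProb p G.edgeFinset F else 0) * W v := by
    intro F _
    split <;> simp
  rw [Finset.sum_congr rfl this, ← Finset.sum_mul, sum_worldProb_filter p hS,
    List.prod_toFinset p (hπ v).edges_nodup, mul_comm]
end

section
/- Let (G, p) be a probabilistic graph whose edge set is partitioned as E = E_1 ∪ E_2 with E_1 ∩ E_2 = ∅, such that the set of vertices incident to edges in E_1 and the set of vertices incident to edges in E_2 intersect in exactly one vertex a (an articulation vertex). Let v be a vertex incident only to edges of E_1 with v ≠ a, and let Q be a vertex incident only to edges of E_2 with Q ≠ a. Then the reachability probability factorizes: P(v↔Q) computed in (G, p) equals the product of the reachability probability P(v↔a) computed in the probabilistic graph restricted to edge set E_1 and the reachability probability P(a↔Q) computed in the probabilistic graph restricted to edge set E_2. -/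
open Finset

lemma mem_incident_of_reachable' {V : Type*} [DecidableEq V]
    {F : Finset (Sym2 V)} {u x : V}
    (h : (SimpleGraph.fromEdgeSet (↑F : Set (Sym2 V))).Reachable u x) (hne : x ≠ u) :
    ∃ e ∈ F, x ∈ e := by
  obtain ⟨w⟩ := h.symm
  cases w with
  | nil => exact absurd rfl hne
  | cons h' w' =>
    rw [SimpleGraph.fromEdgeSet_adj] at h'
    exact ⟨_, h'.1, Sym2.mem_mk_left _ _⟩

lemma reach_union_iff' {V : Type*} [DecidableEq V] (E₁ E₂ F₁ F₂ : Finset (Sym2 V))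
    (hF₁ : F₁ ⊆ E₁) (hF₂ : F₂ ⊆ E₂) (a v Q : V)
    (hone : ∀ x, (∃ e ∈ E₁, x ∈ e) → (∃ e ∈ E₂, x ∈ e) → x = a)
    (hv₂ : ¬ ∃ e ∈ E₂, v ∈ e) (hQ₁ : ¬ ∃ e ∈ E₁, Q ∈ e) (hvQ : v ≠ Q) :
    (SimpleGraph.fromEdgeSet (↑(F₁ ∪ F₂) : Set (Sym2 V))).Reachable v Q ↔
      (SimpleGraph.fromEdgeSet (↑F₁ : Set (Sym2 V))).Reachable v a ∧
      (SimpleGraph.fromEdgeSet (↑F₂ : Set (Sym2 V))).Reachable a Q := by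
  set G₁ := SimpleGraph.fromEdgeSet (↑F₁ : Set (Sym2 V)) with hG₁
  set G₂ := SimpleGraph.fromEdgeSet (↑F₂ : Set (Sym2 V)) with hG₂
  constructor
  · rintro ⟨w⟩
    have key : ∀ x y (w : (SimpleGraph.fromEdgeSet (↑(F₁ ∪ F₂) : Set (Sym2 V))).Walk x y),
        (G₁.Reachable v x ∨ (G₁.Reachable v a ∧ G₂.Reachable a x)) →
        (G₁.Reachable v y ∨ (G₁.Reachable v a ∧ G₂.Reachable a y)) := by
      intro x y w
      induction w with
      | nil => exact id
      | @cons x z _ h' w' ih =>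
        intro hP
        rw [SimpleGraph.fromEdgeSet_adj] at h'
        obtain ⟨hm, hne⟩ := h'
        rw [Finset.coe_union, Set.mem_union] at hm
        rcases hm with hm | hm
        · -- edge in F₁
          have hadj : G₁.Adj x z := by rw [hG₁, SimpleGraph.fromEdgeSet_adj]; exact ⟨hm, hne⟩
          have hxS₁ : ∃ e ∈ E₁, x ∈ e := ⟨_, hF₁ hm, Sym2.mem_mk_left _ _⟩
          rcases hP with h | ⟨h1, h2⟩
          · exact ih (Or.inl (h.trans hadj.reachable))
          · by_cases hxa : x = a
            · subst hxa; exact ih (Or.inl (h1.trans hadj.reachable))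
            · rcases mem_incident_of_reachable' h2 hxa with ⟨e, he, hxe⟩
              exact absurd (hone x hxS₁ ⟨e, hF₂ he, hxe⟩) hxa
        · -- edge in F₂
          have hadj : G₂.Adj x z := by rw [hG₂, SimpleGraph.fromEdgeSet_adj]; exact ⟨hm, hne⟩
          have hxS₂ : ∃ e ∈ E₂, x ∈ e := ⟨_, hF₂ hm, Sym2.mem_mk_left _ _⟩
          rcases hP with h | ⟨h1, h2⟩
          · by_cases hxv : x = v
            · exact absurd (hxv ▸ hxS₂) hv₂
            · rcases mem_incident_of_reachable' h hxv with ⟨e, he, hxe⟩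
              have hxa : x = a := hone x ⟨e, hF₁ he, hxe⟩ hxS₂
              subst hxa
              exact ih (Or.inr ⟨h, hadj.reachable⟩)
          · exact ih (Or.inr ⟨h1, h2.trans hadj.reachable⟩)
    rcases key v Q w (Or.inl (SimpleGraph.Reachable.refl v)) with h | h
    · rcases mem_incident_of_reachable' h (fun hQv => hvQ hQv.symm) with ⟨e, he, hQe⟩
      exact absurd ⟨e, hF₁ he, hQe⟩ hQ₁
    · exact h
  · rintro ⟨h1, h2⟩
    have m1 : G₁ ≤ SimpleGraph.fromEdgeSet (↑(F₁ ∪ F₂) : Set (Sym2 V)) := by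
      rw [hG₁]; apply SimpleGraph.fromEdgeSet_mono; rw [Finset.coe_union]
      exact Set.subset_union_left
    have m2 : G₂ ≤ SimpleGraph.fromEdgeSet (↑(F₁ ∪ F₂) : Set (Sym2 V)) := by
      rw [hG₂]; apply SimpleGraph.fromEdgeSet_mono; rw [Finset.coe_union]
      exact Set.subset_union_right
    exact (h1.mono m1).trans (h2.mono m2)

lemma worldProb_union_mul {V : Type*} [DecidableEq V]
    (p : Sym2 V → ℝ) (E₁ E₂ F₁ F₂ : Finset (Sym2 V))
    (hdisj : Disjoint E₁ E₂) (hF₁ : F₁ ⊆ E₁) (hF₂ : F₂ ⊆ E₂) :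
    worldProb p (E₁ ∪ E₂) (F₁ ∪ F₂) = worldProb p E₁ F₁ * worldProb p E₂ F₂ := by
  have hd : ∀ e, e ∈ E₁ → e ∈ E₂ → False := fun e h1 h2 =>
    Finset.disjoint_left.mp hdisj h1 h2
  have hdF : Disjoint F₁ F₂ := hdisj.mono hF₁ hF₂
  have hsd : (E₁ ∪ E₂) \ (F₁ ∪ F₂) = (E₁ \ F₁) ∪ (E₂ \ F₂) := by
    ext e
    have h1 := @hF₁ e
    have h2 := @hF₂ e
    have h3 := hd e
    simp only [mem_sdiff, mem_union]
    tauto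
  have hdE : Disjoint (E₁ \ F₁) (E₂ \ F₂) := hdisj.mono sdiff_subset sdiff_subset
  rw [worldProb, worldProb, worldProb, hsd, Finset.prod_union hdF, Finset.prod_union hdE]
  ring

/-- for a probabilistic graph whose (loopless) edge set is partitioned
as `E₁ ∪ E₂` (disjoint), the incident-vertex sets of `E₁` and `E₂` meeting in
exactly the articulation vertex `a`, and vertices `v ≠ a` incident only to `E₁`
and `Q ≠ a` incident only to `E₂`, the reachability probability factorizes:
`P(v↔Q)` in the whole graph equals `P(v↔a)` restricted to `E₁` times `P(a↔Q)`
restricted to `E₂`. -/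
theorem reachProb_articulation_mul {V : Type*} [Fintype V] [DecidableEq V]
    (E₁ E₂ : Finset (Sym2 V))
    (hdisj : Disjoint E₁ E₂)
    (hloop : ∀ e ∈ E₁ ∪ E₂, ¬ e.IsDiag)
    (p : Sym2 V → ℝ) (hp : ∀ e ∈ E₁ ∪ E₂, 0 ≤ p e ∧ p e ≤ 1)
    (a : V)
    (hart : {x : V | ∃ e ∈ E₁, x ∈ e} ∩ {x : V | ∃ e ∈ E₂, x ∈ e} = {a})
    (v : V) (hv₁ : v ∈ {x : V | ∃ e ∈ E₁, x ∈ e})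
    (hv₂ : v ∉ {x : V | ∃ e ∈ E₂, x ∈ e}) (hva : v ≠ a)
    (Q : V) (hQ₂ : Q ∈ {x : V | ∃ e ∈ E₂, x ∈ e})
    (hQ₁ : Q ∉ {x : V | ∃ e ∈ E₁, x ∈ e}) (hQa : Q ≠ a) :
    reachProb p (E₁ ∪ E₂) v Q = reachProb p E₁ v a * reachProb p E₂ a Q := by
  classical
  have hone : ∀ x, (∃ e ∈ E₁, x ∈ e) → (∃ e ∈ E₂, x ∈ e) → x = a := by
    intro x h1 h2
    have : x ∈ ({a} : Set V) := hart ▸ ⟨h1, h2⟩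
    exact this
  have hvQ : v ≠ Q := fun h => hQ₁ (h ▸ hv₁)
  rw [reachProb, reachProb, reachProb, Finset.sum_mul_sum]
  rw [← Finset.sum_product']
  symm
  apply Finset.sum_nbij' (i := fun P : Finset (Sym2 V) × Finset (Sym2 V) => P.1 ∪ P.2)
    (j := fun F => (F ∩ E₁, F ∩ E₂))
  · rintro ⟨F₁, F₂⟩ hF
    rw [Finset.mem_product, Finset.mem_powerset, Finset.mem_powerset] at hF
    rw [Finset.mem_powerset]
    exact Finset.union_subset_union hF.1 hF.2
  · intro F hF
    rw [Finset.mem_product, Finset.mem_powerset, Finset.mem_powerset]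
    exact ⟨Finset.inter_subset_right, Finset.inter_subset_right⟩
  · rintro ⟨F₁, F₂⟩ hF
    rw [Finset.mem_product, Finset.mem_powerset, Finset.mem_powerset] at hF
    have e1 : F₂ ∩ E₁ = ∅ :=
      Finset.disjoint_iff_inter_eq_empty.mp (hdisj.symm.mono_left hF.2)
    have e2 : F₁ ∩ E₂ = ∅ :=
      Finset.disjoint_iff_inter_eq_empty.mp (hdisj.mono_left hF.1)
    have h1 : (F₁ ∪ F₂) ∩ E₁ = F₁ := by
      rw [Finset.union_inter_distrib_right, Finset.inter_eq_left.mpr hF.1, e1,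
        Finset.union_empty]
    have h2 : (F₁ ∪ F₂) ∩ E₂ = F₂ := by
      rw [Finset.union_inter_distrib_right, Finset.inter_eq_left.mpr hF.2, e2,
        Finset.empty_union]
    simp [h1, h2]
  · intro F hF
    rw [Finset.mem_powerset] at hF
    simp only
    rw [← Finset.inter_union_distrib_left, Finset.inter_eq_left.mpr hF]
  · rintro ⟨F₁, F₂⟩ hF
    rw [Finset.mem_product, Finset.mem_powerset, Finset.mem_powerset] at hF
    simp only
    rw [worldProb_union_mul p E₁ E₂ F₁ F₂ hdisj hF.1 hF.2]
    have hiff := reach_union_iff' E₁ E₂ F₁ F₂ hF.1 hF.2 a v Q hone hv₂ hQ₁ hvQ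
    by_cases h1 : (SimpleGraph.fromEdgeSet (↑F₁ : Set (Sym2 V))).Reachable v a <;>
      by_cases h2 : (SimpleGraph.fromEdgeSet (↑F₂ : Set (Sym2 V))).Reachable a Q
    · rw [if_pos h1, if_pos h2, if_pos (hiff.mpr ⟨h1, h2⟩)]
    · rw [if_pos h1, if_neg h2, if_neg (fun h => h2 (hiff.mp h).2), mul_zero]
    · rw [if_neg h1, if_pos h2, if_neg (fun h => h1 (hiff.mp h).1), zero_mul]
    · rw [if_neg h1, if_neg h2, if_neg (fun h => h1 (hiff.mp h).1), zero_mul]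
end

section
/- Knapsack reduction (Theorem 1, combinatorial core): let n ≥ 1, let w_1, …, w_n be positive integers and v_1, …, v_n be nonnegative reals, and let k be a nonnegative integer. Construct the graph G whose vertex set consists of a root Q and, for each i, a chain of w_i new vertices Q — u_i^1 — u_i^2 — ⋯ — u_i^{w_i}, the chains being pairwise vertex-disjoint; assign every edge probability 1, assign node weight v_i to the last chain vertex u_i^{w_i} and weight 0 to every other vertex. Then the maximum, over all edge subsets E' ⊆ E with |E'| ≤ k, of the expected information flow to Q in (V, E', p|_{E'}) equals the 0-1 knapsack optimum max { Σ_{i=1}^n v_i x_i : x ∈ {0,1}^n, Σ_{i=1}^n w_i x_i ≤ k }. -/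
open Finset

/-- Vertex type of the knapsack graph: a root `none` plus, for each item `i`,
a chain of `w i` fresh vertices `some ⟨i, j⟩`, the chains being pairwise disjoint. -/
abbrev KnapVertex (n : ℕ) (w : Fin n → ℕ) := Option ((i : Fin n) × Fin (w i))

/-- The `j`-th edge of chain `i`: it joins the root `none` to the first chain vertex
when `j = 0`, and the `(j-1)`-st chain vertex to the `j`-th chain vertex otherwise. -/
def knapEdge {n : ℕ} {w : Fin n → ℕ} (i : Fin n) (j : Fin (w i)) :
    Sym2 (KnapVertex n w) :=
  if (j : ℕ) = 0 then s(none, some ⟨i, j⟩)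
  else s(some ⟨i, ⟨(j : ℕ) - 1, Nat.lt_of_le_of_lt (Nat.sub_le _ _) j.isLt⟩⟩, some ⟨i, j⟩)

/-- The edge set of the knapsack graph: all chain edges. -/
noncomputable def knapEdges (n : ℕ) (w : Fin n → ℕ) : Finset (Sym2 (KnapVertex n w)) :=
  Finset.univ.image (fun x : (i : Fin n) × Fin (w i) => knapEdge x.1 x.2)

/-- Node weights of the knapsack graph: the last vertex of chain `i` carries
weight `v i`, every other vertex carries weight `0`. -/
noncomputable def knapWeight {n : ℕ} {w : Fin n → ℕ} (v : Fin n → ℝ) :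
    KnapVertex n w → ℝ
  | none => 0
  | some ⟨i, j⟩ => if (j : ℕ) = w i - 1 then v i else 0

/-!
With every edge probability `1` only the world `F = E'` has positive probability, so the
expected flow is the flow in `E'`: the sum of `v i` over the chains whose last vertex is
reachable from the root. A walk from the root can only advance along a chain edge by edge, so
that vertex is reachable iff all `w i` edges of chain `i` lie in `E'`. Hence the values of edge
sets with `|E'| ≤ k` are exactly the sums `∑ i ∈ S, v i` with `∑ i ∈ S, w i ≤ k`: the two sets
whose suprema are compared coincide.
-/

theorem expFlow_const_one {V : Type*} [Fintype V] [DecidableEq V]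
    (E : Finset (Sym2 V)) (W : V → ℝ) (Q : V) :
    expFlow (fun _ => 1) E W Q = flowW W Q E := by
  rw [expFlow, sum_eq_single_of_mem E (mem_powerset_self E)]
  · simp [worldProb]
  · intro F hF hFE
    obtain ⟨e, he⟩ : (E \ F).Nonempty :=
      sdiff_nonempty.mpr fun hEF => hFE (Subset.antisymm (mem_powerset.mp hF) hEF)
    simp [worldProb, prod_eq_zero he]

theorem setOf_knapsack_bool_eq_finset {ι : Type*} [Fintype ι] (w : ι → ℕ) (v : ι → ℝ) (k : ℕ) :
    {r : ℝ | ∃ x : ι → Bool, (∑ i, if x i then w i else 0) ≤ k ∧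
        r = ∑ i, if x i then v i else 0} =
    {r : ℝ | ∃ S : Finset ι, ∑ i ∈ S, w i ≤ k ∧ r = ∑ i ∈ S, v i} := by
  classical
  ext r
  constructor
  · rintro ⟨x, hx, rfl⟩
    exact ⟨univ.filter (x ·), by rwa [sum_filter], by rw [sum_filter]⟩
  · rintro ⟨S, hS, rfl⟩
    exact ⟨(· ∈ S), by simpa [sum_ite_mem] using hS, by simp [sum_ite_mem]⟩

section KnapsackGraph

variable {n : ℕ} {w : Fin n → ℕ} {E : Finset (Sym2 (KnapVertex n w))}

theorem knapEdge_injective :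
    Function.Injective (fun x : (i : Fin n) × Fin (w i) => knapEdge x.1 x.2) := by
  rintro ⟨i, j⟩ ⟨i', j'⟩ h
  simp only [knapEdge] at h
  split_ifs at h <;>
    simp only [Sym2.eq_iff, reduceCtorEq, Option.some.injEq, false_and, and_false, or_false,
      true_and] at h
  · exact h
  · rcases h with ⟨-, h⟩ | ⟨h₁, h₂⟩
    · exact h
    · have hj : (j : ℕ) - 1 = j' := congrArg (fun x : (i : Fin n) × Fin (w i) => (x.2 : ℕ)) h₁
      have hj' : (j : ℕ) = j' - 1 := congrArg (fun x : (i : Fin n) × Fin (w i) => (x.2 : ℕ)) h₂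
      omega

def PrefixIn (E : Finset (Sym2 (KnapVertex n w))) : KnapVertex n w → Prop
  | none => True
  | some ⟨i, j⟩ => ∀ j' : Fin (w i), j' ≤ j → knapEdge i j' ∈ E

theorem PrefixIn.of_adj (hE : E ⊆ knapEdges n w)
    {a b : KnapVertex n w} (hab : (SimpleGraph.fromEdgeSet (E : Set (Sym2 _))).Adj a b)
    (ha : PrefixIn E a) : PrefixIn E b := by
  obtain ⟨hmem, -⟩ := SimpleGraph.fromEdgeSet_adj _ |>.mp hab
  obtain ⟨⟨i, j⟩, -, hij⟩ := mem_image.mp (hE hmem)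
  have hjE : knapEdge i j ∈ E := hij ▸ hmem
  simp only [knapEdge] at hij
  split_ifs at hij with hj <;> rcases Sym2.eq_iff.mp hij with ⟨rfl, rfl⟩ | ⟨rfl, rfl⟩
  · intro j' hj'
    rwa [Fin.ext (show (j' : ℕ) = j by rw [Fin.le_def] at hj'; omega)]
  · trivial
  · intro j' hj'
    rcases eq_or_ne j' j with rfl | hne
    · exact hjE
    · exact ha j' (by rw [Fin.le_def] at hj' ⊢; rw [Fin.ne_iff_vne] at hne; simp only; omega)
  · exact fun j' hj' => ha j' (by rw [Fin.le_def] at hj' ⊢; simp only at hj'; omega)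

theorem reachable_none_iff_prefixIn (hE : E ⊆ knapEdges n w) {b : KnapVertex n w} :
    (SimpleGraph.fromEdgeSet (E : Set (Sym2 _))).Reachable none b ↔ PrefixIn E b := by
  constructor
  · rw [SimpleGraph.reachable_iff_reflTransGen]
    intro h
    induction h with
    | refl => trivial
    | tail _ hbc ih => exact ih.of_adj hE hbc
  · rcases b with _ | ⟨i, m, hm⟩
    · exact fun _ => SimpleGraph.Reachable.refl _
    intro hb
    induction m with
    | zero =>
      refine SimpleGraph.Adj.reachable ((SimpleGraph.fromEdgeSet_adj _).mpr ⟨?_, by simp⟩)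
      simpa [knapEdge] using hb ⟨0, hm⟩ le_rfl
    | succ m ih =>
      refine (ih (by omega) fun j' hj' => hb j' ?_).trans
        (SimpleGraph.Adj.reachable ((SimpleGraph.fromEdgeSet_adj _).mpr ⟨?_, by simp⟩))
      · rw [Fin.le_def] at hj' ⊢; simp only at hj' ⊢; omega
      · simpa [knapEdge] using hb ⟨m + 1, hm⟩ le_rfl

def fullChains (E : Finset (Sym2 (KnapVertex n w))) : Finset (Fin n) :=
  univ.filter fun i => ∀ j, knapEdge i j ∈ E

def chainEdges (w : Fin n → ℕ) (S : Finset (Fin n)) : Finset (Sym2 (KnapVertex n w)) :=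
  (S.sigma fun _ => univ).map ⟨_, knapEdge_injective⟩

theorem knapEdge_mem_chainEdges {S : Finset (Fin n)} {i : Fin n} (j : Fin (w i)) :
    knapEdge i j ∈ chainEdges w S ↔ i ∈ S :=
  (mem_map' (f := ⟨_, knapEdge_injective⟩) (a := ⟨i, j⟩)).trans (by simp)

theorem card_chainEdges (S : Finset (Fin n)) : (chainEdges w S).card = ∑ i ∈ S, w i := by
  simp [chainEdges]

theorem chainEdges_subset_knapEdges (S : Finset (Fin n)) : chainEdges w S ⊆ knapEdges n w := by
  intro e he
  obtain ⟨x, -, rfl⟩ := mem_map.mp he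
  exact mem_image_of_mem _ (mem_univ x)

theorem chainEdges_subset_iff {S : Finset (Fin n)} :
    chainEdges w S ⊆ E ↔ S ⊆ fullChains E := by
  constructor
  · exact fun h i hi =>
      mem_filter.mpr ⟨mem_univ i, fun j => h ((knapEdge_mem_chainEdges j).mpr hi)⟩
  · intro h e he
    obtain ⟨⟨i, j⟩, hij, rfl⟩ := mem_map.mp he
    exact (mem_filter.mp (h (mem_sigma.mp hij).1)).2 j

theorem fullChains_chainEdges (hw : ∀ i, 0 < w i) (S : Finset (Fin n)) :
    fullChains (chainEdges w S) = S := by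
  refine Subset.antisymm (fun i hi => ?_) (chainEdges_subset_iff.mp Subset.rfl)
  exact (knapEdge_mem_chainEdges ⟨0, hw i⟩).mp ((mem_filter.mp hi).2 _)

theorem reachable_chain_last_iff (hE : E ⊆ knapEdges n w) {i : Fin n} (hi : 0 < w i) :
    (SimpleGraph.fromEdgeSet (E : Set (Sym2 (KnapVertex n w)))).Reachable none
      (some ⟨i, ⟨w i - 1, Nat.sub_lt hi one_pos⟩⟩) ↔ ∀ j, knapEdge i j ∈ E := by
  rw [reachable_none_iff_prefixIn hE]
  exact ⟨fun h j => h j (Fin.le_def.mpr (Nat.le_sub_one_of_lt j.isLt)), fun h j _ => h j⟩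

theorem flowW_knapWeight (hw : ∀ i, 0 < w i) (v : Fin n → ℝ) (hE : E ⊆ knapEdges n w) :
    flowW (knapWeight v) none E = ∑ i ∈ fullChains E, v i := by
  rw [flowW, Fintype.sum_option, ← univ_sigma_univ, sum_sigma, fullChains, sum_filter]
  simp only [knapWeight, ite_self, zero_add]
  refine sum_congr rfl fun i _ => ?_
  rw [sum_eq_single_of_mem ⟨w i - 1, Nat.sub_lt (hw i) one_pos⟩ (mem_univ _)]
  · simp only [if_true]
    exact if_congr (reachable_chain_last_iff hE (hw i)) rfl rfl
  · intro j _ hj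
    rw [Ne, Fin.ext_iff] at hj
    simp [hj]

end KnapsackGraph

open scoped Classical in
theorem maxFlow_eq_knapsack_general (n : ℕ)
    (w : Fin n → ℕ) (hw : ∀ i, 0 < w i)
    (v : Fin n → ℝ) (k : ℕ) :
    sSup {r : ℝ | ∃ E' ⊆ knapEdges n w, E'.card ≤ k ∧
        r = expFlow (fun _ => 1) E' (knapWeight v) (none : KnapVertex n w)} =
    sSup {r : ℝ | ∃ x : Fin n → Bool, (∑ i, if x i then w i else 0) ≤ k ∧
        r = ∑ i, if x i then v i else 0} := by
  congr 1
  rw [setOf_knapsack_bool_eq_finset]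
  ext r
  constructor
  · rintro ⟨E, hE, hcard, rfl⟩
    refine ⟨fullChains E, ?_, by rw [expFlow_const_one, flowW_knapWeight hw v hE]⟩
    calc ∑ i ∈ fullChains E, w i
        = (chainEdges w (fullChains E)).card := (card_chainEdges _).symm
      _ ≤ E.card := card_le_card (chainEdges_subset_iff.mpr Subset.rfl)
      _ ≤ k := hcard
  · rintro ⟨S, hS, rfl⟩
    refine ⟨chainEdges w S, chainEdges_subset_knapEdges S, (card_chainEdges S).trans_le hS, ?_⟩
    rw [expFlow_const_one, flowW_knapWeight hw v (chainEdges_subset_knapEdges S),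
      fullChains_chainEdges hw]

open scoped Classical in
/-- knapsack reduction, combinatorial core: in the knapsack graph
built from positive integer weights `w i`, nonnegative values `v i` (all edge
probabilities `1`, weight `v i` on the last vertex of chain `i`, `0` elsewhere),
the maximum over edge subsets `E' ⊆ E` with `|E'| ≤ k` of the expected information
flow to the root equals the 0-1 knapsack optimum. -/
theorem maxFlow_eq_knapsack (n : ℕ) (hn : 1 ≤ n)
    (w : Fin n → ℕ) (hw : ∀ i, 0 < w i)
    (v : Fin n → ℝ) (hv : ∀ i, 0 ≤ v i) (k : ℕ) :
    sSup {r : ℝ | ∃ E' ⊆ knapEdges n w, E'.card ≤ k ∧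
        r = expFlow (fun _ => 1) E' (knapWeight v) (none : KnapVertex n w)} =
    sSup {r : ℝ | ∃ x : Fin n → Bool, (∑ i, if x i then w i else 0) ≤ k ∧
        r = ∑ i, if x i then v i else 0} :=
  maxFlow_eq_knapsack_general n w hw v k
end

section
/- In the probabilistic graph constructed from a 0-1 knapsack instance (root Q joined to n pairwise vertex-disjoint chains, the i-th chain having w_i edges, all edge probabilities 1, node weight v_i on the last vertex of chain i and 0 elsewhere), for every edge subset E' ⊆ E the expected information flow to Q in (V, E', p|_{E'}) equals Σ over those indices i such that E' contains all w_i edges of chain i of v_i. -/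
open Finset

section AuxLemmas

lemma worldProb_one {V : Type*} [DecidableEq V] (E F : Finset (Sym2 V)) (hF : F ⊆ E) :
    worldProb (fun _ => (1:ℝ)) E F = if F = E then 1 else 0 := by
  unfold worldProb
  simp only [Finset.prod_const_one, one_mul, sub_self]
  by_cases h : F = E
  · simp [h]
  · have hne : (E \ F).Nonempty := by
      rw [Finset.sdiff_nonempty]
      intro hEF
      exact h (Finset.Subset.antisymm hF hEF)
    obtain ⟨e, he⟩ := hne
    rw [if_neg h]
    exact Finset.prod_eq_zero he rfl

lemma expFlow_one {V : Type*} [Fintype V] [DecidableEq V] (E : Finset (Sym2 V))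
    (W : V → ℝ) (Q : V) :
    expFlow (fun _ => (1:ℝ)) E W Q = flowW W Q E := by
  unfold expFlow
  rw [Finset.sum_eq_single E]
  · rw [worldProb_one E E (Finset.Subset.refl E), if_pos rfl, one_mul]
  · intro F hF hne
    rw [worldProb_one E F (Finset.mem_powerset.mp hF), if_neg hne, zero_mul]
  · intro h
    exact absurd (Finset.mem_powerset.mpr (Finset.Subset.refl E)) h

/-- invariant predicate: a vertex `some ⟨i, j⟩` satisfies it iff all chain edges up to
position `j` are present in `F`; the root satisfies it vacuously. -/
def inS {n : ℕ} {w : Fin n → ℕ} (F : Finset (Sym2 (KnapVertex n w)))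
    (x : KnapVertex n w) : Prop :=
  ∀ (i : Fin n) (j : Fin (w i)), x = some ⟨i, j⟩ →
    ∀ k : Fin (w i), (k : ℕ) ≤ (j : ℕ) → knapEdge i k ∈ F

lemma knapEdge_val_eq {n : ℕ} {w : Fin n → ℕ} (i : Fin n) (j k : Fin (w i))
    (h : (j : ℕ) = (k : ℕ)) : knapEdge i j = knapEdge i k := by
  have : j = k := Fin.ext h
  rw [this]

lemma inS_of_adj {n : ℕ} {w : Fin n → ℕ} {F : Finset (Sym2 (KnapVertex n w))}
    (hF : F ⊆ knapEdges n w) {a b : KnapVertex n w}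
    (hab : (SimpleGraph.fromEdgeSet (↑F : Set (Sym2 (KnapVertex n w)))).Adj a b)
    (ha : inS F a) : inS F b := by
  rw [SimpleGraph.fromEdgeSet_adj] at hab
  obtain ⟨hmem, hne⟩ := hab
  have hmemF : s(a, b) ∈ F := hmem
  have : s(a, b) ∈ knapEdges n w := hF hmemF
  rw [knapEdges, Finset.mem_image] at this
  obtain ⟨⟨i', j'⟩, -, he⟩ := this
  dsimp only at he
  unfold knapEdge at he
  split_ifs at he with h0
  · -- root edge
    rw [Sym2.eq_iff] at he
    rcases he with ⟨ha', hb'⟩ | ⟨ha', hb'⟩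
    · subst ha' hb'
      intro i j hj k hk
      injection hj with hj
      cases hj
      have hk0 : (k : ℕ) = 0 := Nat.le_antisymm (hk.trans (le_of_eq h0)) (Nat.zero_le _)
      have : knapEdge i' k = knapEdge i' j' := knapEdge_val_eq i' k j' (by omega)
      rw [this]
      unfold knapEdge
      rw [if_pos h0]
      exact hmemF
    · intro i j hj
      rw [← ha'] at hj
      cases hj
  · -- internal edge
    rw [Sym2.eq_iff] at he
    rcases he with ⟨ha', hb'⟩ | ⟨ha', hb'⟩
    · -- a is the lower endpoint, b the upper
      subst ha' hb'
      intro i j hj k hk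
      injection hj with hj
      cases hj
      rcases Nat.lt_or_ge (k : ℕ) (j' : ℕ) with hlt | hge
      · exact ha i' _ rfl k (by simp only [Fin.val_mk]; omega)
      · have : knapEdge i' k = knapEdge i' j' := knapEdge_val_eq i' k j' (by omega)
        rw [this]
        unfold knapEdge
        rw [if_neg h0]
        exact hmemF
    · -- a is the upper endpoint, b the lower
      subst ha' hb'
      intro i j hj k hk
      injection hj with hj
      cases hj
      exact ha i' _ rfl k (by simp only [Fin.val_mk] at hk; omega)

lemma inS_of_walk {n : ℕ} {w : Fin n → ℕ} {F : Finset (Sym2 (KnapVertex n w))}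
    (hF : F ⊆ knapEdges n w) {a b : KnapVertex n w}
    (p : (SimpleGraph.fromEdgeSet (↑F : Set (Sym2 (KnapVertex n w)))).Walk a b)
    (ha : inS F a) : inS F b := by
  induction p with
  | nil => exact ha
  | cons h p ih => exact ih (inS_of_adj hF h ha)

lemma reach_imp {n : ℕ} {w : Fin n → ℕ} {F : Finset (Sym2 (KnapVertex n w))}
    (hF : F ⊆ knapEdges n w) {i : Fin n} {j : Fin (w i)}
    (h : (SimpleGraph.fromEdgeSet (↑F : Set (Sym2 (KnapVertex n w)))).Reachable none
      (some ⟨i, j⟩)) :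
    ∀ k : Fin (w i), (k : ℕ) ≤ (j : ℕ) → knapEdge i k ∈ F := by
  obtain ⟨p⟩ := h
  have hnone : inS F (none : KnapVertex n w) := by
    intro i' j' h'
    cases h'
  exact inS_of_walk hF p hnone i j rfl

lemma reach_of_all {n : ℕ} {w : Fin n → ℕ} {F : Finset (Sym2 (KnapVertex n w))}
    {i : Fin n} (hall : ∀ k : Fin (w i), knapEdge i k ∈ F) :
    ∀ m (hm : m < w i),
      (SimpleGraph.fromEdgeSet (↑F : Set (Sym2 (KnapVertex n w)))).Reachable none
        (some ⟨i, ⟨m, hm⟩⟩) := by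
  intro m
  induction m with
  | zero =>
    intro hm
    apply SimpleGraph.Adj.reachable
    rw [SimpleGraph.fromEdgeSet_adj]
    refine ⟨?_, by simp⟩
    have := hall ⟨0, hm⟩
    unfold knapEdge at this
    simpa using this
  | succ m ih =>
    intro hm
    have hm' : m < w i := Nat.lt_of_succ_lt hm
    refine (ih hm').trans (SimpleGraph.Adj.reachable ?_)
    rw [SimpleGraph.fromEdgeSet_adj]
    constructor
    · have := hall ⟨m + 1, hm⟩
      unfold knapEdge at this
      simp only [Nat.succ_ne_zero, if_false] at this
      simpa using this
    · intro h
      injection h with h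
      have := congrArg (fun x : (i : Fin n) × Fin (w i) => (x.2 : ℕ)) h
      simp at this

end AuxLemmas

open scoped Classical in
/-- in the knapsack graph (all edge probabilities `1`, weight `v i`
on the last vertex of chain `i`, `0` elsewhere), for every edge subset `E'` the
expected information flow to the root equals the sum of `v i` over those chains
`i` all of whose `w i` edges are contained in `E'`. -/
theorem knapsack_expFlow_eq (n : ℕ) (w : Fin n → ℕ) (hw : ∀ i, 0 < w i)
    (v : Fin n → ℝ) (hv : ∀ i, 0 ≤ v i)
    (E' : Finset (Sym2 (KnapVertex n w))) (hE' : E' ⊆ knapEdges n w) :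
    expFlow (fun _ => 1) E' (knapWeight v) (none : KnapVertex n w) =
      ∑ i ∈ Finset.univ.filter (fun i : Fin n => ∀ j : Fin (w i), knapEdge i j ∈ E'),
        v i := by
  rw [expFlow_one, flowW, Fintype.sum_option, ← Finset.univ_sigma_univ, Finset.sum_sigma,
    Finset.sum_filter]
  simp only [knapWeight, ite_self, zero_add]
  refine Finset.sum_congr rfl fun i _ => ?_
  have hlast : w i - 1 < w i := by have := hw i; omega
  set last : Fin (w i) := ⟨w i - 1, hlast⟩ with hlastdef
  rw [Finset.sum_eq_single_of_mem last (Finset.mem_univ _)]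
  · have hiff : (SimpleGraph.fromEdgeSet (↑E' : Set (Sym2 (KnapVertex n w)))).Reachable none
        (some ⟨i, last⟩) ↔ ∀ j : Fin (w i), knapEdge i j ∈ E' := by
      constructor
      · intro h k
        exact reach_imp hE' h k (by have := k.isLt; simp only [hlastdef, Fin.val_mk]; omega)
      · intro h
        exact reach_of_all h (w i - 1) hlast
    rw [if_pos (show ((last : Fin (w i)) : ℕ) = w i - 1 from rfl)]
    by_cases h : ∀ j : Fin (w i), knapEdge i j ∈ E'
    · rw [if_pos (hiff.mpr h), if_pos h]
    · rw [if_neg (fun hr => h (hiff.mp hr)), if_neg h]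
  · intro j _ hj
    have hvj : (j : ℕ) ≠ w i - 1 := by
      intro hc
      exact hj (Fin.ext (by simp [hlastdef, hc]))
    rw [if_neg hvj, ite_self]
end
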